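/- arXiv:2305.01927 — 3 statements merged into one kernel-verified Lean document; each statement's English description precedes it below -/
import Mathlib

section
/- Let G be a finite threshold graph such that either χ(G) is not divisible by 3, or G is ω-unique (i.e., G contains exactly one clique of order ω(G)). Then the robust chromatic number of G equals ⌈χ(G)/3⌉. -/
open SimpleGraph

/-- A 1-selection on `G`: each vertex `v` selects (at most) one pair containing `v`;
deleting the selected pairs from the edge set removes at most one edge incident
to each vertex.  (Selecting a non-edge, e.g. the diagonal, deletes nothing at `v`.) -/
def IsOneSelection {V : Type*} (G : SimpleGraph V) (f : V → Sym2 V) : Prop :=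
  ∀ v : V, v ∈ f v

/-- The 1-removed graph `G_f`. -/
def oneRemoved {V : Type*} (G : SimpleGraph V) (f : V → Sym2 V) : SimpleGraph V :=
  G.deleteEdges (Set.range f)

/-- The chromatic number of `G` as a natural number. -/
noncomputable def chromNum {V : Type*} (G : SimpleGraph V) : ℕ :=
  sInf {n : ℕ | G.Colorable n}

/-- The robust chromatic number `χ₁(G)`: the minimum of `χ(G_f)` over all 1-selections. -/
noncomputable def robustChromNum {V : Type*} (G : SimpleGraph V) : ℕ :=
  sInf {m : ℕ | ∃ f : V → Sym2 V, IsOneSelection G f ∧ chromNum (oneRemoved G f) = m}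

/-- The robust clique number `ω₁(G)`: the minimum of `ω(G_f)` over all 1-selections. -/
noncomputable def robustCliqueNum {V : Type*} (G : SimpleGraph V) : ℕ :=
  sInf {m : ℕ | ∃ f : V → Sym2 V, IsOneSelection G f ∧ (oneRemoved G f).cliqueNum = m}

/-- A set of vertices is independent if no two of its elements are adjacent. -/
def IsIndepVxSet {V : Type*} (G : SimpleGraph V) (s : Set V) : Prop :=
  s.Pairwise fun a b => ¬ G.Adj a b

/-- The independence number of `G`. -/
noncomputable def indepNum {V : Type*} (G : SimpleGraph V) : ℕ :=
  sSup {n : ℕ | ∃ s : Finset V, IsIndepVxSet G ↑s ∧ s.card = n}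

/-- The robust independence number `α₁(G)`: the maximum of `α(G_f)` over all 1-selections. -/
noncomputable def robustIndepNum {V : Type*} (G : SimpleGraph V) : ℕ :=
  sSup {m : ℕ | ∃ f : V → Sym2 V, IsOneSelection G f ∧ _root_.indepNum (oneRemoved G f) = m}

/-- `U` is robust independent in `G` if some 1-selection makes it independent. -/
def IsRobustIndep {V : Type*} (G : SimpleGraph V) (U : Set V) : Prop :=
  ∃ f : V → Sym2 V, IsOneSelection G f ∧ IsIndepVxSet (oneRemoved G f) U

/-- Threshold graph. -/
def IsThresholdGraph {V : Type*} (G : SimpleGraph V) : Prop :=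
  ∃ (h : ℝ) (g : V → ℝ), ∀ x y : V, x ≠ y → (G.Adj x y ↔ g x + g y > h)

/-- `G` is ω-unique: it has exactly one clique of order `ω(G)`. -/
def IsOmegaUnique {V : Type*} (G : SimpleGraph V) : Prop :=
  ∃! s : Finset V, G.IsNClique G.cliqueNum s

/-- Split graph: vertex set partitions into a clique and an independent set. -/
def IsSplitGraph {V : Type*} (G : SimpleGraph V) : Prop :=
  ∃ A : Set V, G.IsClique A ∧ IsIndepVxSet G Aᶜ

/-- Chordal graph: no induced cycle of length greater than 3. -/
def IsChordalGraph {V : Type*} (G : SimpleGraph V) : Prop :=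
  ∀ n : ℕ, 4 ≤ n → ¬ ∃ φ : Fin n ↪ V,
    ∀ i j : Fin n, G.Adj (φ i) (φ j) ↔ (SimpleGraph.cycleGraph n).Adj i j

/-- Interval graph: vertices can be assigned nonempty closed real intervals so that
two distinct vertices are adjacent iff their intervals intersect. -/
def IsIntervalGraph {V : Type*} (G : SimpleGraph V) : Prop :=
  ∃ a b : V → ℝ, (∀ v, a v ≤ b v) ∧
    ∀ u v : V, u ≠ v →
      (G.Adj u v ↔ (Set.Icc (a u) (b u) ∩ Set.Icc (a v) (b v)).Nonempty)

/-- Unit interval graph: vertices can be labelled by reals so that two distinct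
vertices are adjacent iff their labels are at distance less than 1. -/
def IsUnitIntervalGraph {V : Type*} (G : SimpleGraph V) : Prop :=
  ∃ r : V → ℝ, ∀ u v : V, u ≠ v → (G.Adj u v ↔ |r u - r v| < 1)

/-- Quasi-unicyclic: every connected component contains at most one cycle,
i.e. any two cycles lying in the same component have the same edge set. -/
def QuasiUnicyclic {V : Type*} [DecidableEq V] (G : SimpleGraph V) : Prop :=
  ∀ (u v : V) (p : G.Walk u u) (q : G.Walk v v),
    p.IsCycle → q.IsCycle → G.Reachable u v →
      p.edges.toFinset = q.edges.toFinset

/-- The Kneser graph `KG(n,k)`. -/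
def kneserGraph (n k : ℕ) : SimpleGraph {s : Finset (Fin n) // s.card = k} where
  Adj a b := a ≠ b ∧ Disjoint a.1 b.1
  symm := by
    refine ⟨?_⟩
    intro a b hab
    exact ⟨hab.1.symm, hab.2.symm⟩
  loopless := by
    refine ⟨?_⟩
    intro a ha
    exact ha.1 rfl

/-!
Order the vertices of a threshold graph by decreasing weight. Adjacency is then closed under
moving both endpoints earlier, so the first `ω` vertices form a maximum clique, every later
vertex is adjacent only to vertices among the first `ω - 1`, and `χ = ω`.

A 1-selection lets every vertex delete one edge, so a colour class of `G_f` meets a clique of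
`G` in at most three vertices (a clique on four vertices has six edges); hence `χ₁ ≥ ⌈ω/3⌉`.
Conversely, cut the top clique into consecutive triples, let each triple delete its own edges
cyclically, and let every later vertex delete its edge to the head of the last triple. Colouring
by triple, with the later vertices joining the last triple, is proper as soon as no later vertex
sees the part of the last triple behind its head. This can only fail when `3 ∣ ω`, and then such
an edge `uv` would give the second maximum clique `{u} ∪ {first ω - 1 vertices}`.
-/

open SimpleGraph Finset

variable {V : Type*} {G : SimpleGraph V}

lemma chromNum_le_of_colorable {k : ℕ} (h : G.Colorable k) : chromNum G ≤ k :=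
  Nat.sInf_le h

lemma colorable_chromNum [Finite V] (G : SimpleGraph V) : G.Colorable (chromNum G) := by
  have := Fintype.ofFinite V
  exact Nat.sInf_mem (s := {k | G.Colorable k}) ⟨_, G.colorable_of_fintype⟩

lemma one_le_cliqueNum [Finite V] (v : V) : 1 ≤ G.cliqueNum := by
  simpa using (show G.IsClique (({v} : Finset V) : Set V) by simp).card_le_cliqueNum

lemma cliqueNum_le_chromNum [Finite V] (G : SimpleGraph V) : G.cliqueNum ≤ chromNum G := by
  obtain ⟨s, hs⟩ := G.exists_isNClique_cliqueNum
  exact hs.card_eq ▸ hs.isClique.card_le_of_colorable (colorable_chromNum G)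

lemma oneRemoved_adj {f : V → Sym2 V} {u v : V} :
    (oneRemoved G f).Adj u v ↔ G.Adj u v ∧ s(u, v) ∉ Set.range f :=
  deleteEdges_adj

lemma robustChromNum_le_chromNum {f : V → Sym2 V} (hf : IsOneSelection G f) :
    robustChromNum G ≤ chromNum (oneRemoved G f) :=
  Nat.sInf_le ⟨f, hf, rfl⟩

lemma card_le_three_of_isClique_of_isIndepSet {f : V → Sym2 V} (hf : IsOneSelection G f)
    {s : Finset V} (hclique : G.IsClique s) (hindep : (oneRemoved G f).IsIndepSet s) :
    #s ≤ 3 := by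
  classical
  -- every pair in `s` is a loop or an edge of `G` deleted by one of its own endpoints
  have hsub : s.sym2 ⊆ s.image f ∪ s.image Sym2.diag := by
    intro z hz
    induction z using Sym2.ind with
    | h a b =>
      rw [mk_mem_sym2_iff] at hz
      rw [mem_union, mem_image, mem_image]
      by_cases hab : a = b
      · exact Or.inr ⟨a, hz.1, by rw [hab]; rfl⟩
      · have hdel : s(a, b) ∈ Set.range f := by
          by_contra hnot
          exact hindep hz.1 hz.2 hab (oneRemoved_adj.mpr ⟨hclique hz.1 hz.2 hab, hnot⟩)
        obtain ⟨w, hw⟩ := hdel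
        have hws : w ∈ s := by
          have := hf w
          rw [hw, Sym2.mem_iff] at this
          rcases this with rfl | rfl
          exacts [hz.1, hz.2]
        exact Or.inl ⟨w, hws, hw⟩
  have hcard := (card_le_card hsub).trans (card_union_le _ _)
  rw [card_sym2, Nat.choose_two_right, Nat.add_sub_cancel] at hcard
  have himage := card_image_le (s := s) (f := f)
  have hdiag := card_image_le (s := s) (f := Sym2.diag)
  by_contra! hs
  have : 5 * #s ≤ (#s + 1) * #s := Nat.mul_le_mul_right _ (by omega)
  omega

lemma cliqueNum_le_three_mul_chromNum_oneRemoved [Finite V] {f : V → Sym2 V}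
    (hf : IsOneSelection G f) : G.cliqueNum ≤ 3 * chromNum (oneRemoved G f) := by
  classical
  obtain ⟨K, hK⟩ := G.exists_isNClique_cliqueNum
  obtain ⟨C⟩ := colorable_chromNum (oneRemoved G f)
  have hclass : ∀ c ∈ (univ : Finset (Fin (chromNum (oneRemoved G f)))),
      #{v ∈ K | C v = c} ≤ 3 := by
    intro c _
    refine card_le_three_of_isClique_of_isIndepSet hf (hK.isClique.subset ?_) ?_
    · exact coe_subset.mpr (filter_subset _ K)
    · intro u hu v hv _ hadj
      simp only [coe_filter, Set.mem_ofPred_eq] at hu hv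
      exact C.valid hadj (hu.2.trans hv.2.symm)
  simpa [hK.card_eq] using card_le_mul_card_image_of_maps_to (fun v _ => mem_univ (C v)) 3 hclass

lemma cliqueNum_add_two_div_three_le_robustChromNum [Finite V] (G : SimpleGraph V) :
    (G.cliqueNum + 2) / 3 ≤ robustChromNum G := by
  refine le_csInf ⟨_, fun v => s(v, v), fun v => Sym2.mem_mk_left v v, rfl⟩ ?_
  rintro _ ⟨f, hf, rfl⟩
  have := cliqueNum_le_three_mul_chromNum_oneRemoved hf
  omega

lemma cliqueNum_le_of_equiv [Finite V] {n : ℕ} (e : Fin n ≃ V) : G.cliqueNum ≤ n := by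
  obtain ⟨K, hK⟩ := G.exists_isNClique_cliqueNum
  simpa [hK.card_eq] using card_le_univ (K.map e.symm.toEmbedding)

lemma exists_equiv_fin_antitone [Fintype V] {α : Type*} [LinearOrder α] (g : V → α) :
    ∃ e : Fin (Fintype.card V) ≃ V, Antitone (g ∘ e) := by
  let e₀ := (Fintype.equivFin V).symm
  let w : Fin (Fintype.card V) → αᵒᵈ := fun i => OrderDual.toDual (g (e₀ i))
  exact ⟨(Tuple.sort w).trans e₀, Tuple.monotone_sort w⟩

section Nested

variable {n : ℕ}

def IsNestedAlong (G : SimpleGraph V) (e : Fin n ≃ V) : Prop :=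
  ∀ ⦃u v : V⦄ ⦃i j : Fin n⦄, G.Adj u v → i ≤ e.symm u → j ≤ e.symm v → i ≠ j →
    G.Adj (e i) (e j)

lemma IsThresholdGraph.exists_isNestedAlong [Fintype V] (hG : IsThresholdGraph G) :
    ∃ e : Fin (Fintype.card V) ≃ V, IsNestedAlong G e := by
  obtain ⟨h, g, hadj⟩ := hG
  obtain ⟨e, he⟩ := exists_equiv_fin_antitone g
  refine ⟨e, fun u v i j huv hi hj hij => ?_⟩
  rw [hadj _ _ huv.ne] at huv
  rw [hadj _ _ (e.injective.ne hij)]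
  have hu := he hi
  have hv := he hj
  simp only [Function.comp_apply, Equiv.apply_symm_apply] at hu hv
  linarith

def initSeg (e : Fin n ≃ V) (m : ℕ) : Finset V :=
  ({i | (i : ℕ) < m} : Finset (Fin n)).map e.toEmbedding

lemma exists_mem_le_symm (e : Fin n ≃ V) {s : Finset V} {i : Fin n} (hi : (i : ℕ) < #s) :
    ∃ v ∈ s, i ≤ e.symm v := by
  by_contra! h
  have hsub : s.image (fun v => (e.symm v : ℕ)) ⊆ range i := by
    intro k hk
    obtain ⟨v, hv, rfl⟩ := mem_image.mp hk
    exact mem_range.mpr (h v hv)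
  have := card_le_card hsub
  rw [card_image_of_injective _ fun a b hab => e.symm.injective (Fin.ext hab), card_range] at this
  omega

variable {e : Fin n ≃ V} {m : ℕ}

lemma mem_initSeg {v : V} : v ∈ initSeg e m ↔ (e.symm v : ℕ) < m := by
  simp [initSeg, mem_map_equiv]

lemma card_initSeg (hm : m ≤ n) : #(initSeg e m) = m := by
  simp [initSeg, Fin.card_filter_val_lt, hm]

lemma IsNestedAlong.adj_of_lt (he : IsNestedAlong G e) {s : Finset V} (hs : G.IsNClique m s)
    {i j : Fin n} (hi : (i : ℕ) < m) (hj : (j : ℕ) < m) (hij : i ≠ j) : G.Adj (e i) (e j) := by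
  classical
  wlog hlt : i < j generalizing i j
  · exact (this hj hi hij.symm (lt_of_le_of_ne (not_lt.mp hlt) hij.symm)).symm
  obtain ⟨y, hy, hjy⟩ := exists_mem_le_symm e (s := s) (i := j) (by rw [hs.card_eq]; exact hj)
  obtain ⟨x, hx, hix⟩ := exists_mem_le_symm e (s := s.erase y) (i := i)
    (by rw [card_erase_of_mem hy, hs.card_eq]; omega)
  exact he (hs.isClique (mem_of_mem_erase hx) hy (ne_of_mem_erase hx)) hix hjy hij

lemma IsNestedAlong.isNClique_initSeg [Finite V] (he : IsNestedAlong G e)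
    (hm : m ≤ G.cliqueNum) : G.IsNClique m (initSeg e m) := by
  obtain ⟨K, hK⟩ := G.exists_isNClique_cliqueNum
  refine ⟨fun u hu v hv huv => ?_, card_initSeg (hm.trans (cliqueNum_le_of_equiv e))⟩
  rw [mem_coe, mem_initSeg] at hu hv
  simpa using he.adj_of_lt hK (by omega) (by omega) (e.symm.injective.ne huv)

lemma IsNestedAlong.isNClique_insert_initSeg [DecidableEq V] (he : IsNestedAlong G e)
    (hm : G.IsNClique m (initSeg e m)) {u v : V} (huv : G.Adj u v) (hu : m ≤ e.symm u)
    (hv : m ≤ e.symm v + 1) : G.IsNClique (m + 1) (insert u (initSeg e m)) := by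
  refine hm.insert fun w hw => ?_
  rw [mem_initSeg] at hw
  have hwv : e.symm w ≤ e.symm v := Fin.le_iff_val_le_val.mpr (by omega)
  have hwu : e.symm u ≠ e.symm w := Fin.ne_of_val_ne (by omega)
  simpa using he huv le_rfl hwv hwu

variable [Finite V]

lemma IsNestedAlong.lt_cliqueNum_of_adj (he : IsNestedAlong G e) {u v : V} (huv : G.Adj u v)
    (hu : G.cliqueNum ≤ e.symm u) : (e.symm v : ℕ) + 1 < G.cliqueNum := by
  classical
  by_contra! hv
  have hbig := he.isNClique_insert_initSeg (he.isNClique_initSeg le_rfl) huv hu hv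
  have := hbig.isClique.card_le_cliqueNum
  rw [hbig.card_eq] at this
  omega

lemma IsNestedAlong.add_two_lt_cliqueNum_of_adj (he : IsNestedAlong G e) (hG : IsOmegaUnique G)
    {u v : V} (huv : G.Adj u v) (hu : G.cliqueNum ≤ e.symm u) :
    (e.symm v : ℕ) + 2 < G.cliqueNum := by
  classical
  have hv := he.lt_cliqueNum_of_adj huv hu
  by_contra! hv'
  have hother := he.isNClique_insert_initSeg (he.isNClique_initSeg (Nat.sub_le _ 1)) huv
    (by omega) (by omega)
  rw [Nat.sub_add_cancel (by omega)] at hother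
  have hsame := hG.unique hother (he.isNClique_initSeg le_rfl)
  have hu' : u ∈ initSeg e G.cliqueNum := hsame ▸ mem_insert_self u _
  rw [mem_initSeg] at hu'
  omega

lemma IsNestedAlong.symm_le_of_adj (he : IsNestedAlong G e)
    (h : ¬ 3 ∣ G.cliqueNum ∨ IsOmegaUnique G) {u v : V} (huv : G.Adj u v)
    (hu : G.cliqueNum ≤ e.symm u) : (e.symm v : ℕ) ≤ 3 * ((G.cliqueNum - 1) / 3) := by
  rcases h with h3 | hG
  · have := he.lt_cliqueNum_of_adj huv hu
    omega
  · have := he.add_two_lt_cliqueNum_of_adj hG huv hu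
    omega

lemma IsNestedAlong.chromNum_eq_cliqueNum (he : IsNestedAlong G e) :
    chromNum G = G.cliqueNum := by
  refine le_antisymm (chromNum_le_of_colorable ?_) (cliqueNum_le_chromNum G)
  refine (colorable_iff_exists_bdd_nat_coloring _).mpr
    ⟨Coloring.mk (fun v => min (e.symm v : ℕ) (G.cliqueNum - 1)) ?_, fun v => ?_⟩
  · intro u v huv hc
    have hne : (e.symm u : ℕ) ≠ e.symm v := fun h => huv.ne (e.symm.injective (Fin.ext h))
    rcases le_or_gt G.cliqueNum (e.symm u) with hu | hu
    · have := he.lt_cliqueNum_of_adj huv hu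
      omega
    · have := he.lt_cliqueNum_of_adj huv.symm (by omega)
      omega
  · have := one_le_cliqueNum (G := G) v
    change min (e.symm v : ℕ) (G.cliqueNum - 1) < G.cliqueNum
    omega

end Nested

section TripleSelection

variable {n m i j : ℕ}

/-- Inside the top `m` positions, `i` points to the next position of its triple or back to the
head of its triple; every later position points to the head of the last triple. -/
def triplePartner (m i : ℕ) : ℕ :=
  if i + 1 < m ∧ i % 3 ≠ 2 then i + 1 else 3 * (min i (m - 1) / 3)

lemma triplePartner_lt (hm : m ≤ n) (hi : i < n) : triplePartner m i < n := by
  unfold triplePartner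
  split_ifs <;> omega

lemma triplePartner_eq_or_eq (hij : i < j) (hc : min i (m - 1) / 3 = min j (m - 1) / 3)
    (htail : m ≤ j → i ≤ 3 * ((m - 1) / 3)) : triplePartner m i = j ∨ triplePartner m j = i := by
  unfold triplePartner
  split_ifs <;> omega

def tripleSelection (e : Fin n ≃ V) (hm : m ≤ n) (v : V) : Sym2 V :=
  s(v, e ⟨triplePartner m (e.symm v), triplePartner_lt hm (e.symm v).isLt⟩)

variable {e : Fin n ≃ V}

lemma isOneSelection_tripleSelection (e : Fin n ≃ V) (hm : m ≤ n) :
    IsOneSelection G (tripleSelection e hm) :=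
  fun _ => Sym2.mem_mk_left _ _

lemma mk_mem_range_tripleSelection {hm : m ≤ n} {u v : V} (h : triplePartner m (e.symm u) = e.symm v) :
    s(u, v) ∈ Set.range (tripleSelection e hm) := by
  refine ⟨u, ?_⟩
  have : (⟨triplePartner m (e.symm u), triplePartner_lt hm (e.symm u).isLt⟩ : Fin n) = e.symm v :=
    Fin.ext h
  rw [tripleSelection, this, Equiv.apply_symm_apply]

lemma colorable_oneRemoved_tripleSelection [Finite V] (hm : G.cliqueNum ≤ n)
    (htail : ∀ ⦃u v : V⦄, G.Adj u v → G.cliqueNum ≤ e.symm u →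
      (e.symm v : ℕ) ≤ 3 * ((G.cliqueNum - 1) / 3)) :
    (oneRemoved G (tripleSelection e hm)).Colorable ((G.cliqueNum + 2) / 3) := by
  refine (colorable_iff_exists_bdd_nat_coloring _).mpr
    ⟨Coloring.mk (fun v => min (e.symm v : ℕ) (G.cliqueNum - 1) / 3) ?_, fun v => ?_⟩
  · intro u v huv hc
    obtain ⟨hadj, hnot⟩ := oneRemoved_adj.mp huv
    wlog hlt : (e.symm u : ℕ) < e.symm v generalizing u v
    · have hne : (e.symm u : ℕ) ≠ e.symm v := fun h => huv.ne (e.symm.injective (Fin.ext h))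
      exact this huv.symm hc.symm hadj.symm (by rwa [Sym2.eq_swap]) (by omega)
    rcases triplePartner_eq_or_eq hlt hc (fun hv => htail hadj.symm hv) with h | h
    · exact hnot (mk_mem_range_tripleSelection h)
    · exact hnot (Sym2.eq_swap ▸ mk_mem_range_tripleSelection h)
  · have := one_le_cliqueNum (G := G) v
    change min (e.symm v : ℕ) (G.cliqueNum - 1) / 3 < (G.cliqueNum + 2) / 3
    omega

lemma robustChromNum_le_of_adj_le [Finite V] (e : Fin n ≃ V)
    (htail : ∀ ⦃u v : V⦄, G.Adj u v → G.cliqueNum ≤ e.symm u →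
      (e.symm v : ℕ) ≤ 3 * ((G.cliqueNum - 1) / 3)) :
    robustChromNum G ≤ (G.cliqueNum + 2) / 3 :=
  have hm := cliqueNum_le_of_equiv (G := G) e
  (robustChromNum_le_chromNum (isOneSelection_tripleSelection e hm)).trans
    (chromNum_le_of_colorable (colorable_oneRemoved_tripleSelection hm htail))

end TripleSelection

theorem robustChromNum_of_threshold_general
    {V : Type} [Fintype V] (G : SimpleGraph V)
    (hthr : IsThresholdGraph G) (h : ¬ (3 ∣ chromNum G) ∨ IsOmegaUnique G) :
    robustChromNum G = (chromNum G + 2) / 3 := by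
  obtain ⟨e, he⟩ := hthr.exists_isNestedAlong
  rw [he.chromNum_eq_cliqueNum] at h ⊢
  exact le_antisymm (robustChromNum_le_of_adj_le e fun _ _ => he.symm_le_of_adj h)
    (cliqueNum_add_two_div_three_le_robustChromNum G)

/-- For a finite threshold graph `G` such that `3 ∤ χ(G)` or `G` is ω-unique,
`χ₁(G) = ⌈χ(G)/3⌉`. -/
theorem robustChromNum_of_threshold
    {V : Type} [Fintype V] [DecidableEq V] (G : SimpleGraph V)
    (hthr : IsThresholdGraph G) (h : ¬ (3 ∣ chromNum G) ∨ IsOmegaUnique G) :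
    robustChromNum G = (chromNum G + 2) / 3 :=
  robustChromNum_of_threshold_general G hthr h
end

section
/- Let k ≥ 2 be an integer, let n ≥ 2k, and let c be an integer with 2k ≤ c ≤ n such that n − c ≥ C(c, k) − C(2k, k). Then χ₁(KG(n, k)) ≤ n − c + 1. -/
open SimpleGraph

/-!
Fix a set `L` of `n - c` points and a `2k`-set `D` avoiding `L`. A `k`-set meeting `L` is coloured
by one of its points in `L`, the `k`-subsets of `D` share one extra colour, and the remaining
`k`-subsets of `Lᶜ`, of which there are `C(c,k) - C(2k,k) ≤ #L`, get pairwise distinct colours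
from `L`. Disjoint sets cannot share a point, so a set coloured by one of its points has at most
one monochromatic neighbour, the exceptional set of that colour; and a `k`-subset `T` of `D` has
only `D \ T`. So every monochromatic edge has an endpoint for which it is the only monochromatic
edge, and letting each vertex select an edge to a monochromatic neighbour removes all of them.
-/

open Finset

def monoNeighborSet {V α : Type*} (G : SimpleGraph V) (col : V → α) (v : V) : Set V :=
  {w | G.Adj v w ∧ col w = col v}

theorem robustChromNum_le_of_colorable {V : Type*} {G : SimpleGraph V} {f : V → Sym2 V} {m : ℕ}
    (hf : IsOneSelection G f) (hm : (oneRemoved G f).Colorable m) : robustChromNum G ≤ m :=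
  calc robustChromNum G ≤ chromNum (oneRemoved G f) := Nat.sInf_le ⟨f, hf, rfl⟩
    _ ≤ m := Nat.sInf_le hm

theorem robustChromNum_le_card_of_monoNeighborSet_subsingleton {V α : Type*} [Fintype α]
    (G : SimpleGraph V) (col : V → α)
    (h : ∀ a b, G.Adj a b → col a = col b →
      (monoNeighborSet G col a).Subsingleton ∨ (monoNeighborSet G col b).Subsingleton) :
    robustChromNum G ≤ Fintype.card α := by
  classical
  let f : V → Sym2 V := fun v =>
    if hv : (monoNeighborSet G col v).Nonempty then s(v, hv.choose) else s(v, v)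
  have hf : IsOneSelection G f := fun v => by
    simp only [f]
    split_ifs <;> exact Sym2.mem_mk_left _ _
  have selects : ∀ a b, G.Adj a b → col b = col a → (monoNeighborSet G col a).Subsingleton →
      f a = s(a, b) := fun a b hab hcol ha => by
    have hb : b ∈ monoNeighborSet G col a := ⟨hab, hcol⟩
    have hne : (monoNeighborSet G col a).Nonempty := ⟨b, hb⟩
    simp only [f, dif_pos hne, ha hne.choose_spec hb]
  refine robustChromNum_le_of_colorable hf (Coloring.colorable (Coloring.mk col ?_))
  intro a b hab hcol
  rw [oneRemoved, deleteEdges_adj] at hab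
  refine hab.2 ?_
  rcases h a b hab.1 hcol with ha | hb
  · exact ⟨a, selects a b hab.1 hcol.symm ha⟩
  · exact ⟨b, (selects b a hab.1.symm hcol hb).trans (Sym2.eq_swap)⟩

namespace kneserGraph

variable {n k : ℕ}

theorem eq_sdiff_of_disjoint {D : Finset (Fin n)} (hD : #D = 2 * k)
    {a b : {s : Finset (Fin n) // #s = k}} (ha : a.1 ⊆ D) (hb : b.1 ⊆ D)
    (hab : Disjoint a.1 b.1) : b.1 = D \ a.1 := by
  refine eq_of_subset_of_card_le (fun x hx => mem_sdiff.2 ⟨hb hx, disjoint_right.1 hab hx⟩) ?_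
  rw [card_sdiff_of_subset ha, hD, a.2, b.2]
  omega

variable (k) (L D : Finset (Fin n))

def exceptionalSets : Finset (Finset (Fin n)) :=
  Lᶜ.powersetCard k \ D.powersetCard k

variable {k L D}

section

variable (g : exceptionalSets k L D ↪ L)

noncomputable def coloring (T : {s : Finset (Fin n) // #s = k}) : Option L :=
  if hR : T.1 ∈ exceptionalSets k L D then some (g ⟨T.1, hR⟩)
  else if hL : (T.1 ∩ L).Nonempty then some ⟨hL.choose, (mem_inter.1 hL.choose_spec).2⟩
  else none

variable {T T' : {s : Finset (Fin n) // #s = k}}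

theorem mem_of_coloring_eq_some (hT : T.1 ∉ exceptionalSets k L D) {x : L}
    (hx : coloring g T = some x) : x.1 ∈ T.1 := by
  unfold coloring at hx
  rw [dif_neg hT] at hx
  split_ifs at hx with hL
  cases hx
  exact (mem_inter.1 hL.choose_spec).1

theorem subset_of_coloring_eq_none (hT : coloring g T = none) : T.1 ⊆ D := by
  unfold coloring at hT
  split_ifs at hT with hR hL
  have hTL : T.1 ⊆ Lᶜ := fun x hx =>
    mem_compl.2 fun hxL => hL ⟨x, mem_inter.2 ⟨hx, hxL⟩⟩
  by_contra hTD
  exact hR (mem_sdiff.2 ⟨mem_powersetCard.2 ⟨hTL, T.2⟩, fun h => hTD (mem_powersetCard.1 h).1⟩)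

theorem coloring_injOn (hT : T.1 ∈ exceptionalSets k L D) (hT' : T'.1 ∈ exceptionalSets k L D)
    (h : coloring g T = coloring g T') : T = T' := by
  simp only [coloring, dif_pos hT, dif_pos hT', Option.some_inj] at h
  exact Subtype.ext (congrArg Subtype.val (g.injective h) :)

theorem monoNeighborSet_subsingleton (hD : #D = 2 * k) (hT : T.1 ∉ exceptionalSets k L D) :
    (monoNeighborSet (kneserGraph n k) (coloring g) T).Subsingleton := by
  rcases hc : coloring g T with _ | x
  · have hTD := subset_of_coloring_eq_none g hc
    have partner : ∀ w ∈ monoNeighborSet (kneserGraph n k) (coloring g) T, w.1 = D \ T.1 :=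
      fun w ⟨hTw, hw⟩ => eq_sdiff_of_disjoint hD hTD
        (subset_of_coloring_eq_none g (hw.trans hc)) hTw.2
    exact fun w hw w' hw' => Subtype.ext ((partner w hw).trans (partner w' hw').symm)
  · have hxT := mem_of_coloring_eq_some g hT hc
    have exceptional : ∀ w ∈ monoNeighborSet (kneserGraph n k) (coloring g) T,
        w.1 ∈ exceptionalSets k L D := fun w ⟨hTw, hw⟩ => by
      by_contra hwR
      exact disjoint_left.1 hTw.2 hxT (mem_of_coloring_eq_some g hwR (hw.trans hc))
    exact fun w hw w' hw' =>
      coloring_injOn g (exceptional w hw) (exceptional w' hw') (hw.2.trans hw'.2.symm)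

end

theorem robustChromNum_le_card_add_one (g : exceptionalSets k L D ↪ L) (hD : #D = 2 * k) :
    robustChromNum (kneserGraph n k) ≤ #L + 1 := by
  refine (robustChromNum_le_card_of_monoNeighborSet_subsingleton (kneserGraph n k) (coloring g)
    fun a b hab hc => ?_).trans_eq (by simp)
  by_cases ha : a.1 ∈ exceptionalSets k L D
  · by_cases hb : b.1 ∈ exceptionalSets k L D
    · exact absurd (coloring_injOn g ha hb hc) hab.1
    · exact Or.inr (monoNeighborSet_subsingleton g hD hb)
  · exact Or.inl (monoNeighborSet_subsingleton g hD ha)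

end kneserGraph

theorem robustChromNum_kneserGraph_le_general (k n c : ℕ)
    (hc1 : 2 * k ≤ c) (hc2 : c ≤ n)
    (h : c.choose k - (2 * k).choose k ≤ n - c) :
    robustChromNum (kneserGraph n k) ≤ n - c + 1 := by
  obtain ⟨L, -, hL⟩ := exists_subset_card_eq (s := (univ : Finset (Fin n))) (n := n - c) (by simp)
  have hLc : #Lᶜ = c := by
    rw [card_compl, hL, Fintype.card_fin]
    omega
  obtain ⟨D, hDL, hD⟩ := exists_subset_card_eq (hLc ▸ hc1 : 2 * k ≤ #Lᶜ)
  have hR : #(kneserGraph.exceptionalSets k L D) ≤ #L := by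
    rwa [kneserGraph.exceptionalSets, card_sdiff_of_subset (powersetCard_mono hDL),
      card_powersetCard, card_powersetCard, hLc, hD, hL]
  obtain ⟨g⟩ := Function.Embedding.nonempty_of_card_le
    (α := kneserGraph.exceptionalSets k L D) (β := L) (by simpa using hR)
  simpa [hL] using kneserGraph.robustChromNum_le_card_add_one g hD

/-- If `k ≥ 2`, `n ≥ 2k`, and `2k ≤ c ≤ n` with
`n - c ≥ C(c,k) - C(2k,k)`, then `χ₁(KG(n,k)) ≤ n - c + 1`. -/
theorem robustChromNum_kneserGraph_le (k n c : ℕ) (hk : 2 ≤ k) (hn : 2 * k ≤ n)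
    (hc1 : 2 * k ≤ c) (hc2 : c ≤ n)
    (h : c.choose k - (2 * k).choose k ≤ n - c) :
    robustChromNum (kneserGraph n k) ≤ n - c + 1 :=
  robustChromNum_kneserGraph_le_general k n c hc1 hc2 h
end

section
/- A finite graph G satisfies χ₁(G) = 1 if and only if G is quasi-unicyclic. In particular, every tree T satisfies χ₁(T) = 1. -/
open SimpleGraph

/-!
`χ₁(G) = 1` says exactly that some 1-selection `f` removes every edge, i.e. every edge is selected
by one of its ends. A cycle has as many vertices as edges, so each of its vertices then selects an
edge of the cycle, and the vertex set of a cycle is closed under selection. Along a trail that ends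
in such a closed set and avoids the selection of its start, each vertex must select the edge by
which the trail entered it, which drags the start into the set. Hence a cycle `q` reachable from a
cycle `p` first meets `p`, then lies on the vertices of `p`, and then every edge of `q`, being
selected by a vertex of `p`, is an edge of `p`.

Conversely, in a quasi-unicyclic graph each component has at most one edge outside a spanning
forest (two such edges would close two different fundamental cycles). Orienting the forest towards
a root placed at an end of that edge, and letting the root select it, removes every edge.
-/

namespace SimpleGraph

variable {V : Type*} {G F : SimpleGraph V}

namespace Walk

theorem IsTrail.exists_isTrail_notMem_edges [DecidableEq V] {u x b : V} {c : G.Walk u u}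
    (hc : c.IsTrail) (hx : x ∈ c.support) (hb : b ∈ c.support) (e : Sym2 V) :
    ∃ W : G.Walk x b, W.IsTrail ∧ e ∉ W.edges := by
  have hc' : (c.rotate x hx).IsTrail := hc.rotate hx
  have hb' : b ∈ (c.rotate x hx).support := (c.mem_support_rotate_iff x hx).mpr hb
  by_cases he : e ∈ ((c.rotate x hx).takeUntil b hb').edges
  · refine ⟨_, (hc'.dropUntil hb').reverse, ?_⟩
    rw [edges_reverse, List.mem_reverse]
    exact hc'.disjoint_edges_takeUntil_dropUntil hb' he
  · exact ⟨_, hc'.takeUntil hb', he⟩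

theorem exists_isPath_leaving [DecidableEq V] {A : Set V} {a b : V} (W : G.Walk a b)
    (hW : ∃ v ∈ W.support, v ∈ A) :
    ∃ x ∈ A, ∃ R : G.Walk x b, R.IsPath ∧ ∀ v ∈ R.support, v ∈ A → v = x := by
  induction W with
  | nil => exact ⟨_, by simpa using hW, nil, .nil, by simp⟩
  | @cons a c _ h W ih =>
    by_cases hW' : ∃ v ∈ W.support, v ∈ A
    · exact ih hW'
    push Not at hW'
    refine ⟨a, ?_, _, (cons h W).bypass_isPath, fun v hv hvA ↦ ?_⟩
    · obtain ⟨v, hv, hvA⟩ := hW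
      rw [support_cons, List.mem_cons] at hv
      exact hv.elim (· ▸ hvA) fun hv ↦ absurd hvA (hW' v hv)
    · have hv := support_bypass_subset_support _ hv
      rw [support_cons, List.mem_cons] at hv
      exact hv.elim id fun hv ↦ absurd hvA (hW' v hv)

theorem IsPath.snd_eq_of_eq {u v : V} {p : G.Walk u v} (hp : p.IsPath) (h : v = u) :
    p.snd = u := by
  subst h
  rw [eq_nil_iff_nil.mpr (isPath_iff_nil.mp hp)]
  rfl

end Walk

theorem IsAcyclic.snd_eq_or_snd_eq (hF : F.IsAcyclic) {x y r : V} {p : F.Walk x r}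
    {q : F.Walk y r} (hp : p.IsPath) (hq : q.IsPath) (hxy : F.Adj x y) :
    p.snd = y ∨ q.snd = x := by
  by_cases hy : y ∈ p.support
  · exact .inl (hF.eq_snd_of_adj_start hp hxy hy).symm
  · have hx := hF.mem_support_of_ne_mem_support_of_adj_of_isPath hq.reverse hp.reverse hxy.symm
      (by simpa using hy)
    exact .inr (hF.eq_snd_of_adj_start hq hxy.symm (by simpa using hx)).symm

theorem exists_isCycle_of_adj_of_notMem_edgeSet (hFG : F ≤ G)
    (hreach : F.Reachable = G.Reachable) {a b : V} (hab : G.Adj a b)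
    (hF : s(a, b) ∉ F.edgeSet) :
    ∃ c : G.Walk a a, c.IsCycle ∧ s(a, b) ∈ c.edges ∧
      ∀ e ∈ c.edges, e = s(a, b) ∨ e ∈ F.edgeSet := by
  obtain ⟨p, hp⟩ := (hreach ▸ hab.reachable.symm : F.Reachable b a).exists_isPath
  have hpG : ∀ e ∈ p.edges, e ∈ G.edgeSet := fun e he ↦
    edgeSet_mono hFG (p.edges_subset_edgeSet he)
  refine ⟨.cons hab (p.transfer G hpG), ?_, by simp, ?_⟩
  · rw [Walk.cons_isCycle_iff, Walk.edges_transfer]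
    exact ⟨hp.transfer hpG, fun h ↦ hF (p.edges_subset_edgeSet h)⟩
  · simp only [Walk.edges_cons, Walk.edges_transfer, List.mem_cons]
    exact fun e he ↦ he.imp_right fun h ↦ p.edges_subset_edgeSet h

theorem IsAcyclic.quasiUnicyclic [DecidableEq V] (hG : G.IsAcyclic) : QuasiUnicyclic G :=
  fun _ _ p _ hp _ _ ↦ (hG p hp).elim

end SimpleGraph

section ChromaticNumber

variable {V : Type*}

theorem chromNum_eq_one_iff [Nonempty V] (H : SimpleGraph V) : chromNum H = 1 ↔ H = ⊥ := by
  rw [chromNum, Nat.sInf_upward_closed_eq_succ_iff fun _ _ hle h ↦ h.mono hle]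
  simp [colorable_one_iff, colorable_zero_iff]

theorem chromNum_ne_zero [Finite V] [Nonempty V] (H : SimpleGraph V) : chromNum H ≠ 0 := by
  have := Fintype.ofFinite V
  rw [chromNum, Ne, Nat.sInf_eq_zero, not_or]
  exact ⟨by simp [colorable_zero_iff], Set.nonempty_iff_ne_empty.mp ⟨_, H.colorable_of_fintype⟩⟩

theorem robustChromNum_eq_one_iff [Finite V] [Nonempty V] (G : SimpleGraph V) :
    robustChromNum G = 1 ↔ ∃ f, IsOneSelection G f ∧ G.edgeSet ⊆ Set.range f := by
  set S := {m : ℕ | ∃ f : V → Sym2 V, IsOneSelection G f ∧ chromNum (oneRemoved G f) = m}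
  have hS : ∀ m ∈ S, 1 ≤ m := by
    rintro _ ⟨f, -, rfl⟩
    exact Nat.one_le_iff_ne_zero.mpr (chromNum_ne_zero _)
  have h1 : robustChromNum G = 1 ↔ 1 ∈ S := by
    refine ⟨fun h ↦ h ▸ Nat.sInf_mem ?_,
      fun h ↦ (Nat.sInf_le h).antisymm (hS _ (Nat.sInf_mem ⟨1, h⟩))⟩
    exact Set.nonempty_iff_ne_empty.mpr fun hempty ↦ by simp [robustChromNum, S, hempty] at h
  simp only [h1, S, Set.mem_ofPred_eq, chromNum_eq_one_iff, oneRemoved, deleteEdges_eq_bot]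

end ChromaticNumber

namespace IsOneSelection

variable {V : Type*} {G : SimpleGraph V} {f : V → Sym2 V}

theorem exists_mem_eq (hf : IsOneSelection G f) (hcov : G.edgeSet ⊆ Set.range f)
    {e : Sym2 V} (he : e ∈ G.edgeSet) : ∃ v ∈ e, f v = e := by
  obtain ⟨v, rfl⟩ := hcov he
  exact ⟨v, hf v, rfl⟩

theorem mem_edges_of_isCycle [DecidableEq V] (hf : IsOneSelection G f)
    (hcov : G.edgeSet ⊆ Set.range f) {u v : V} {c : G.Walk u u} (hc : c.IsCycle)
    (hv : v ∈ c.support) : f v ∈ c.edges := by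
  have htail : ∀ w ∈ c.support, w ∈ c.support.tail := fun w hw ↦ by
    rw [← c.cons_tail_support, List.mem_cons] at hw
    exact hw.elim (· ▸ Walk.end_mem_tail_support hc.not_nil) id
  have hsub : c.edges.toFinset ⊆ c.support.tail.toFinset.image f := fun e he ↦ by
    rw [List.mem_toFinset] at he
    obtain ⟨w, hw, rfl⟩ := hf.exists_mem_eq hcov (c.edges_subset_edgeSet he)
    exact Finset.mem_image_of_mem f
      (List.mem_toFinset.mpr (htail w (c.mem_support_of_mem_edges he hw)))
  have hcard : (c.support.tail.toFinset.image f).card ≤ c.edges.toFinset.card := calc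
    _ ≤ c.support.tail.toFinset.card := Finset.card_image_le
    _ = c.edges.toFinset.card := by
      rw [List.toFinset_card_of_nodup hc.support_nodup,
        List.toFinset_card_of_nodup hc.edges_nodup, List.length_tail, Walk.length_support,
        Walk.length_edges, Nat.add_sub_cancel]
  rw [← List.mem_toFinset, Finset.eq_of_subset_of_card_le hsub hcard]
  exact Finset.mem_image_of_mem f (List.mem_toFinset.mpr (htail v hv))

theorem mem_of_isTrail (hf : IsOneSelection G f) (hcov : G.edgeSet ⊆ Set.range f)
    {S : Set V} (hS : ∀ v ∈ S, ∀ w ∈ f v, w ∈ S) {a b : V} {W : G.Walk a b} (hW : W.IsTrail)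
    (hb : b ∈ S) (ha : f a ∉ W.edges) : a ∈ S := by
  induction W with
  | nil => exact hb
  | @cons a c _ h W ih =>
    rw [Walk.isTrail_cons] at hW
    obtain ⟨v, hv, hfv⟩ := hf.exists_mem_eq hcov (G.mem_edgeSet.mpr h)
    have hfc : f c = s(a, c) := by
      rcases Sym2.mem_iff.mp hv with rfl | rfl
      · exact absurd (hfv ▸ List.mem_cons_self) ha
      · exact hfv
    exact hS c (ih hW.1 hb (hfc ▸ hW.2)) a (hfc ▸ Sym2.mem_mk_left a c)

theorem quasiUnicyclic [DecidableEq V] (hf : IsOneSelection G f)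
    (hcov : G.edgeSet ⊆ Set.range f) : QuasiUnicyclic G := by
  suffices h : ∀ u v (p : G.Walk u u) (q : G.Walk v v), p.IsCycle → q.IsCycle →
      G.Reachable v u → ∀ e ∈ q.edges, e ∈ p.edges by
    intro u v p q hp hq huv
    ext e
    simp only [List.mem_toFinset]
    exact ⟨h v u q p hq hp huv e, h u v p q hp hq huv.symm e⟩
  intro u v p q hp hq hvu
  have hclosed {w : V} {c : G.Walk w w} (hc : c.IsCycle) :
      ∀ x ∈ {x | x ∈ c.support}, ∀ y ∈ f x, y ∈ {x | x ∈ c.support} := fun _ hx _ hy ↦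
    c.mem_support_of_mem_edges (hf.mem_edges_of_isCycle hcov hc hx) hy
  obtain ⟨b, hbq, hbp⟩ : ∃ b ∈ q.support, b ∈ p.support := by
    obtain ⟨W⟩ := hvu
    obtain ⟨x, hxq, R, hR, hRq⟩ := W.exists_isPath_leaving (A := {x | x ∈ q.support})
      ⟨v, W.start_mem_support, q.start_mem_support⟩
    refine ⟨x, hxq, hf.mem_of_isTrail hcov (hclosed hp) hR.isTrail p.start_mem_support
      fun hfx ↦ ?_⟩
    -- `f x` would join `x` to another vertex lying both on `q` and on `R`
    have hfq := hf.mem_edges_of_isCycle hcov hq hxq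
    obtain ⟨y, hy⟩ := Sym2.mem_iff_exists.mp (hf x)
    rw [hy] at hfx hfq
    have hyx : y = x :=
      hRq y (R.snd_mem_support_of_mem_edges hfx) (q.snd_mem_support_of_mem_edges hfq)
    exact G.loopless.irrefl x (hyx ▸ q.edges_subset_edgeSet hfq)
  have hsub : ∀ x ∈ q.support, x ∈ p.support := fun x hx ↦ by
    obtain ⟨W, hW, hfW⟩ := hq.isTrail.exists_isTrail_notMem_edges hx hbq (f x)
    exact hf.mem_of_isTrail hcov (hclosed hp) hW hbp hfW
  intro e he
  obtain ⟨w, hw, rfl⟩ := hf.exists_mem_eq hcov (q.edges_subset_edgeSet he)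
  exact hf.mem_edges_of_isCycle hcov hp (hsub w (q.mem_support_of_mem_edges he hw))

end IsOneSelection

namespace QuasiUnicyclic

variable {V : Type*} [DecidableEq V] {G F : SimpleGraph V}

theorem eq_of_notMem_edgeSet (hG : QuasiUnicyclic G) (hFG : F ≤ G)
    (hreach : F.Reachable = G.Reachable) {a b a' b' : V} (hab : G.Adj a b)
    (hF : s(a, b) ∉ F.edgeSet) (hab' : G.Adj a' b') (hF' : s(a', b') ∉ F.edgeSet)
    (haa' : G.Reachable a a') : s(a, b) = s(a', b') := by
  obtain ⟨c, hc, -, hcF⟩ := exists_isCycle_of_adj_of_notMem_edgeSet hFG hreach hab hF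
  obtain ⟨c', hc', hmem, -⟩ := exists_isCycle_of_adj_of_notMem_edgeSet hFG hreach hab' hF'
  rw [← List.mem_toFinset, ← hG a a' c c' hc hc' haa', List.mem_toFinset] at hmem
  exact ((hcF _ hmem).resolve_right hF').symm

theorem exists_root (hG : QuasiUnicyclic G) (hFG : F ≤ G)
    (hreach : F.Reachable = G.Reachable) :
    ∃ r : V → V, (∀ v, G.Reachable v (r v)) ∧ (∀ v w, G.Reachable v w → r v = r w) ∧
      ∀ a b, G.Adj a b → s(a, b) ∉ F.edgeSet → r a ∈ s(a, b) := by
  classical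
  let root (C : G.ConnectedComponent) : V :=
    if h : ∃ a b, G.Adj a b ∧ s(a, b) ∉ F.edgeSet ∧ G.connectedComponentMk a = C then h.choose
    else C.out
  have hroot (C : G.ConnectedComponent) : G.connectedComponentMk (root C) = C := by
    unfold root
    split_ifs with h
    exacts [h.choose_spec.choose_spec.2.2, C.out_eq]
  refine ⟨fun v ↦ root (G.connectedComponentMk v),
    fun v ↦ ConnectedComponent.exact (hroot _).symm,
    fun v w h ↦ congrArg root (ConnectedComponent.sound h), fun a b hab hF ↦ ?_⟩
  have h : ∃ a' b', G.Adj a' b' ∧ s(a', b') ∉ F.edgeSet ∧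
      G.connectedComponentMk a' = G.connectedComponentMk a := ⟨a, b, hab, hF, rfl⟩
  obtain ⟨b', hab', hF', hC⟩ := h.choose_spec
  simp only [root, dif_pos h]
  rw [hG.eq_of_notMem_edgeSet hFG hreach hab hF hab' hF' (ConnectedComponent.exact hC).symm]
  exact Sym2.mem_mk_left _ _

theorem exists_isOneSelection (hG : QuasiUnicyclic G) :
    ∃ f, IsOneSelection G f ∧ G.edgeSet ⊆ Set.range f := by
  classical
  obtain ⟨F, hFG, hF, hreach⟩ := G.exists_isAcyclic_reachable_eq_le
  obtain ⟨r, hr, hr_eq, hr_mem⟩ := hG.exists_root hFG hreach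
  choose P hP using fun v ↦ (hreach ▸ hr v : F.Reachable v (r v)).exists_isPath
  let f (v : V) : Sym2 V :=
    if h : ∃ w, G.Adj v w ∧ s(v, w) ∉ F.edgeSet ∧ r v = v then s(v, h.choose)
    else s(v, (P v).snd)
  have hf_root {a b : V} (hab : G.Adj a b) (hF : s(a, b) ∉ F.edgeSet) (ha : r a = a) :
      f a = s(a, b) := by
    have h : ∃ w, G.Adj a w ∧ s(a, w) ∉ F.edgeSet ∧ r a = a := ⟨b, hab, hF, ha⟩
    simp only [f, dif_pos h]
    exact hG.eq_of_notMem_edgeSet hFG hreach h.choose_spec.1 h.choose_spec.2.1 hab hF .rfl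
  have hf_forest {v : V} (hv : F.Adj v (P v).snd) : f v = s(v, (P v).snd) :=
    dif_neg fun ⟨_, _, _, hrv⟩ ↦ hv.ne ((hP v).snd_eq_of_eq hrv).symm
  refine ⟨f, fun v ↦ by unfold f; split_ifs <;> exact Sym2.mem_mk_left _ _, ?_⟩
  rintro ⟨x, y⟩ (hxy : G.Adj x y)
  by_cases hF' : F.Adj x y
  · have hrxy := hr_eq y x hxy.reachable.symm
    rcases hF.snd_eq_or_snd_eq (hP x) ((Walk.isPath_copy (P y) rfl hrxy).mpr (hP y)) hF'
      with h | h
    · exact ⟨x, (hf_forest (h ▸ hF')).trans (by rw [h])⟩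
    · replace h : (P y).snd = x := by simpa using h
      exact ⟨y, (hf_forest (h ▸ hF'.symm)).trans (by rw [h]; exact Sym2.eq_swap)⟩
  · rcases Sym2.mem_iff.mp (hr_mem x y hxy hF') with hx | hy
    · exact ⟨x, hf_root hxy hF' hx⟩
    · refine ⟨y, (hf_root hxy.symm (by rwa [Sym2.eq_swap]) ?_).trans Sym2.eq_swap⟩
      rw [← hr_eq x y hxy.reachable, hy]

end QuasiUnicyclic

/-- A finite (nonempty) graph `G` has `χ₁(G) = 1` iff it is quasi-unicyclic;
in particular every tree has `χ₁ = 1`. -/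
theorem robustChromNum_eq_one_iff_quasiUnicyclic
    (V : Type) [Fintype V] [DecidableEq V] [Nonempty V] (G : SimpleGraph V) :
    (robustChromNum G = 1 ↔ QuasiUnicyclic G) ∧
      (G.IsTree → robustChromNum G = 1) := by
  have key : robustChromNum G = 1 ↔ QuasiUnicyclic G := by
    rw [robustChromNum_eq_one_iff]
    exact ⟨fun ⟨_, hf, hcov⟩ ↦ hf.quasiUnicyclic hcov, QuasiUnicyclic.exists_isOneSelection⟩
  exact ⟨key, fun hT ↦ key.mpr hT.isAcyclic.quasiUnicyclic⟩
end
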